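/- For integers n ≥ 0 and m ≥ 0, the integral ∫₀^π sin^{2n+1}(x)·cos(2mx) dx equals (−1)^{n+1}·2^{n+1}·n!·(2n+1)!! / ∏_{k=0}^{n}(4m² − (2k+1)²); as a consequence, the limit as M → ∞ of the evenised odd-order (p = 2n+1) forward-difference stencil coefficient ⁽ᵖ⁾d_m = (2ᵖ/M)·Σ_{k=0}^{M-1} sin^p(πk/M)·cos(2πmk/M) equals (2ᵖ/π) times this integral, and its sign is (−1)^m for m ≤ n and (−1)^{n+1} for m > n. In particular for p = 1 the limiting stencil −(2/π)·2/(4m²−1) is positive only at m = 0 (a Mexican-hat profile). -/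

import Mathlib

/-!
Two integrations by parts, whose boundary terms vanish because `sin 0 = sin π = 0`, give the
reduction `((q+2)² − a²) ∫₀^π sin^{q+2} x cos(ax) dx = (q+2)(q+1) ∫₀^π sin^q x cos(ax) dx`.
Starting from `∫₀^π sin x cos(2mx) dx = 2/(1 − 4m²)` and multiplying by the factors
`4m² − (2k+1)²` one at a time yields the closed form. Exactly the factors with `k ≥ m` are
negative, which gives the sign. The stencil coefficient is a left Riemann sum of
`(2ᵖ/π) sinᵖ x cos(2mx)` over `[0, π]`, so it converges by uniform continuity.
-/

open Filter Topology Real intervalIntegral Finset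

theorem abs_riemannSum_sub_integral_le {f : ℝ → ℝ} (hf : Continuous f) {M : ℕ} (hM : 0 < M)
    {η : ℝ} (hη : ∀ x ∈ Set.Icc (0 : ℝ) 1, ∀ y ∈ Set.Icc (0 : ℝ) 1, |x - y| ≤ 1 / M →
      |f x - f y| ≤ η) :
    |(∑ k ∈ range M, f (k / M)) / M - ∫ x in (0 : ℝ)..1, f x| ≤ η := by
  have hM' : (0 : ℝ) < M := by exact_mod_cast hM
  have hsplit : ∫ x in (0 : ℝ)..1, f x
      = ∑ k ∈ range M, ∫ x in (k / M : ℝ)..((k + 1 : ℕ) / M), f x := by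
    rw [sum_integral_adjacent_intervals fun k _ => hf.intervalIntegrable _ _]
    simp [hM'.ne']
  have hconst : (∑ k ∈ range M, f (k / M)) / M
      = ∑ k ∈ range M, ∫ _ in (k / M : ℝ)..((k + 1 : ℕ) / M), f (k / M) := by
    rw [sum_div]
    refine sum_congr rfl fun k _ => ?_
    rw [integral_const, smul_eq_mul]
    push_cast
    ring
  have hpiece : ∀ k ∈ range M,
      |∫ x in (k / M : ℝ)..((k + 1 : ℕ) / M), (f (k / M) - f x)| ≤ η / M := by
    intro k hk
    have hk : (k : ℝ) + 1 ≤ M := by exact_mod_cast mem_range.mp hk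
    have hlen : ((k + 1 : ℕ) : ℝ) / M - k / M = 1 / M := by push_cast; ring
    have := norm_integral_le_of_norm_le_const (a := (k / M : ℝ)) (b := (k + 1 : ℕ) / M)
      (f := fun x => f (k / M) - f x) (C := η) fun x hx => ?_
    · rwa [hlen, abs_of_pos (by positivity), mul_one_div] at this
    rw [Set.uIoc_of_le (by rw [← sub_nonneg, hlen]; positivity)] at hx
    have hkM : (k : ℝ) / M ∈ Set.Icc (0 : ℝ) 1 :=
      ⟨by positivity, (div_le_one hM').mpr (by linarith)⟩
    have hx1 : x ≤ 1 := hx.2.trans (by push_cast; rw [div_le_one hM']; linarith)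
    refine hη _ hkM x ⟨hkM.1.trans hx.1.le, hx1⟩ ?_
    rw [abs_sub_comm, abs_of_pos (sub_pos.mpr hx.1)]
    linarith [hx.2]
  calc |(∑ k ∈ range M, f (k / M)) / M - ∫ x in (0 : ℝ)..1, f x|
      = |∑ k ∈ range M, ∫ x in (k / M : ℝ)..((k + 1 : ℕ) / M), (f (k / M) - f x)| := by
        rw [hconst, hsplit, ← sum_sub_distrib]
        congr 1
        exact sum_congr rfl fun k _ =>
          (integral_sub intervalIntegrable_const (hf.intervalIntegrable _ _)).symm
    _ ≤ ∑ _k ∈ range M, η / M := (abs_sum_le_sum_abs _ _).trans (sum_le_sum hpiece)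
    _ = η := by rw [sum_const, card_range, nsmul_eq_mul]; field_simp

theorem tendsto_riemannSum_integral {f : ℝ → ℝ} (hf : Continuous f) :
    Tendsto (fun M : ℕ => (∑ k ∈ range M, f (k / M)) / M) atTop (𝓝 (∫ x in (0 : ℝ)..1, f x)) := by
  rw [Metric.tendsto_atTop]
  intro ε hε
  obtain ⟨δ, hδ, hfδ⟩ := Metric.uniformContinuousOn_iff_le.mp
    (isCompact_Icc.uniformContinuousOn_of_continuous hf.continuousOn) (ε / 2) (half_pos hε)
  obtain ⟨N, hN⟩ := exists_nat_one_div_lt hδ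
  refine ⟨N + 1, fun M hM => ?_⟩
  have hMN : 1 / (M : ℝ) ≤ 1 / (N + 1) := by
    gcongr
    exact_mod_cast hM
  refine lt_of_le_of_lt (abs_riemannSum_sub_integral_le hf (by omega) fun x hx y hy hxy => ?_)
    (half_lt_self hε)
  exact hfδ x hx y hy (by rw [Real.dist_eq]; linarith)

theorem tendsto_riemannSum_div_integral {g : ℝ → ℝ} (hg : Continuous g) {L : ℝ} (hL : L ≠ 0) :
    Tendsto (fun M : ℕ => (∑ k ∈ range M, g (L * k / M)) / M) atTop
      (𝓝 ((∫ x in (0 : ℝ)..L, g x) / L)) := by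
  have h := tendsto_riemannSum_integral (f := fun t => g (L * t)) (by fun_prop)
  simp only [mul_div_assoc]
  convert h using 2
  rw [integral_comp_mul_left g hL, mul_zero, mul_one, smul_eq_mul, inv_mul_eq_div]

theorem hasDerivAt_sin_pow_mul_cos_reduction (q : ℕ) (a x : ℝ) :
    HasDerivAt (fun y => -((q + 2) * (sin y ^ (q + 1) * cos y * cos (a * y)))
        - a * (sin y ^ (q + 2) * sin (a * y)))
      (((q + 2) ^ 2 - a ^ 2) * (sin x ^ (q + 2) * cos (a * x))
        - (q + 2) * (q + 1) * (sin x ^ q * cos (a * x))) x := by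
  have hax : HasDerivAt (fun y => a * y) a x := by simpa using (hasDerivAt_id x).const_mul a
  have h1 := (((hasDerivAt_sin x).fun_pow (q + 1)).fun_mul (hasDerivAt_cos x)).fun_mul hax.cos
  have h2 := ((hasDerivAt_sin x).fun_pow (q + 2)).fun_mul hax.sin
  refine ((h1.const_mul (q + 2 : ℝ)).neg.sub (h2.const_mul a)).congr_deriv ?_
  push_cast
  linear_combination (-((q : ℝ) + 2) * (q + 1) * sin x ^ q * cos (a * x)) * sin_sq_add_cos_sq x

theorem integral_sin_pow_mul_cos_reduction (q : ℕ) (a : ℝ) :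
    ((q + 2) ^ 2 - a ^ 2) * ∫ x in (0 : ℝ)..π, sin x ^ (q + 2) * cos (a * x)
      = (q + 2) * (q + 1) * ∫ x in (0 : ℝ)..π, sin x ^ q * cos (a * x) := by
  have h := integral_eq_sub_of_hasDerivAt (a := 0) (b := π)
    (fun x _ => hasDerivAt_sin_pow_mul_cos_reduction q a x)
    (Continuous.intervalIntegrable (by fun_prop) _ _)
  rw [integral_sub (Continuous.intervalIntegrable (by fun_prop) _ _)
    (Continuous.intervalIntegrable (by fun_prop) _ _), integral_const_mul, integral_const_mul] at h
  simp only [sin_zero, sin_pi, cos_zero, cos_pi, ne_eq, Nat.add_eq_zero_iff, one_ne_zero,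
    OfNat.ofNat_ne_zero, and_false, not_false_eq_true, zero_pow, mul_neg, mul_one, neg_zero,
    zero_mul, mul_zero, sub_self] at h
  linarith

theorem hasDerivAt_cos_mul_cos_add_sin_mul_sin (a x : ℝ) :
    HasDerivAt (fun y => cos y * cos (a * y) + a * (sin y * sin (a * y)))
      ((a ^ 2 - 1) * (sin x * cos (a * x))) x := by
  have hax : HasDerivAt (fun y => a * y) a x := by simpa using (hasDerivAt_id x).const_mul a
  refine (((hasDerivAt_cos x).fun_mul hax.cos).add
    (((hasDerivAt_sin x).fun_mul hax.sin).const_mul a)).congr_deriv ?_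
  ring

theorem integral_sin_mul_cos (a : ℝ) :
    (1 - a ^ 2) * ∫ x in (0 : ℝ)..π, sin x * cos (a * x) = 1 + cos (a * π) := by
  have h := integral_eq_sub_of_hasDerivAt (a := 0) (b := π)
    (fun x _ => hasDerivAt_cos_mul_cos_add_sin_mul_sin a x)
    (Continuous.intervalIntegrable (by fun_prop) _ _)
  rw [integral_const_mul] at h
  simp only [sin_zero, sin_pi, cos_zero, cos_pi, neg_mul, one_mul, zero_mul, mul_zero, add_zero,
    mul_one] at h
  linarith

theorem four_mul_sq_sub_odd_sq_pos {m k : ℕ} (h : k < m) :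
    0 < 4 * (m : ℝ) ^ 2 - (2 * k + 1) ^ 2 := by
  have : (k : ℝ) + 1 ≤ m := by exact_mod_cast h
  nlinarith

theorem four_mul_sq_sub_odd_sq_neg {m k : ℕ} (h : m ≤ k) :
    4 * (m : ℝ) ^ 2 - (2 * k + 1) ^ 2 < 0 := by
  have : (m : ℝ) ≤ k := by exact_mod_cast h
  nlinarith [m.cast_nonneg (α := ℝ)]

-- `n + 1 - m` truncates to `0` when `n < m`, and then every factor is positive.
theorem neg_one_pow_mul_prod_four_mul_sq_sub_odd_sq_pos (n m : ℕ) :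
    0 < (-1 : ℝ) ^ (n + 1 - m) * ∏ k ∈ range (n + 1), (4 * (m : ℝ) ^ 2 - (2 * k + 1) ^ 2) := by
  have hsign : ∏ k ∈ range (n + 1), (if k < m then 1 else -1 : ℝ) = (-1) ^ (n + 1 - m) := by
    rw [prod_ite, prod_const_one, one_mul, prod_const]
    congr 1
    simp only [not_lt]
    rw [range_eq_Ico, Ico_filter_le, Nat.card_Ico]
    omega
  rw [← hsign, ← prod_mul_distrib]
  refine prod_pos fun k _ => ?_
  split_ifs with hk
  · simpa using four_mul_sq_sub_odd_sq_pos hk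
  · simpa using four_mul_sq_sub_odd_sq_neg (not_lt.mp hk)

theorem integral_sin_pow_mul_cos_mul_prod (n m : ℕ) :
    (∫ x in (0 : ℝ)..π, sin x ^ (2 * n + 1) * cos (2 * m * x))
        * ∏ k ∈ range (n + 1), (4 * (m : ℝ) ^ 2 - (2 * k + 1) ^ 2)
      = (-1) ^ (n + 1) * 2 ^ (n + 1) * (n.factorial : ℝ) * ((2 * n + 1).doubleFactorial : ℝ) := by
  induction n with
  | zero =>
    have h := integral_sin_mul_cos (2 * m)
    rw [show (2 * m : ℝ) * π = m * (2 * π) by ring, cos_nat_mul_two_pi] at h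
    simp only [mul_zero, zero_add, pow_one, prod_range_one, CharP.cast_eq_zero, Nat.factorial_zero,
      Nat.doubleFactorial]
    linear_combination -h
  | succ n ih =>
    have hrec := integral_sin_pow_mul_cos_reduction (2 * n + 1) (2 * m)
    rw [show 2 * n + 1 + 2 = 2 * (n + 1) + 1 by ring] at hrec
    rw [prod_range_succ, Nat.factorial_succ, show 2 * (n + 1) + 1 = 2 * n + 1 + 2 by ring,
      Nat.doubleFactorial_add_two]
    push_cast at hrec ⊢
    linear_combination (-∏ k ∈ range (n + 1), (4 * (m : ℝ) ^ 2 - (2 * k + 1) ^ 2)) * hrec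
      - (2 * n + 3) * (2 * n + 2) * ih

theorem integral_sin_pow_mul_cos_eq (n m : ℕ) :
    ∫ x in (0 : ℝ)..π, sin x ^ (2 * n + 1) * cos (2 * m * x)
      = (-1) ^ (n + 1) * 2 ^ (n + 1) * (n.factorial : ℝ) * ((2 * n + 1).doubleFactorial : ℝ)
        / ∏ k ∈ range (n + 1), (4 * (m : ℝ) ^ 2 - (2 * k + 1) ^ 2) := by
  rw [eq_div_iff (right_ne_zero_of_mul (neg_one_pow_mul_prod_four_mul_sq_sub_odd_sq_pos n m).ne'),
    integral_sin_pow_mul_cos_mul_prod]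

theorem sign_eq_neg_one_pow_of_pos_mul {j : ℕ} {r : ℝ} (h : 0 < (-1) ^ j * r) :
    Real.sign r = (-1) ^ j := by
  rcases neg_one_pow_eq_or ℝ j with hj | hj <;> rw [hj] at h ⊢
  · exact Real.sign_of_pos (by simpa using h)
  · exact Real.sign_of_neg (by simpa using h)

theorem neg_one_pow_min_mul_integral_sin_pow_mul_cos_pos (n m : ℕ) :
    0 < (-1 : ℝ) ^ min m (n + 1) * ∫ x in (0 : ℝ)..π, sin x ^ (2 * n + 1) * cos (2 * m * x) := by
  have hexp : min m (n + 1) + (n + 1 - m) = n + 1 := by omega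
  refine (pos_iff_pos_of_mul_pos ?_).mpr (neg_one_pow_mul_prod_four_mul_sq_sub_odd_sq_pos n m)
  calc (0 : ℝ) < 2 ^ (n + 1) * (n.factorial : ℝ) * ((2 * n + 1).doubleFactorial : ℝ) := by
        positivity
    _ = ((-1) ^ (n + 1)) ^ 2 *
          (2 ^ (n + 1) * (n.factorial : ℝ) * ((2 * n + 1).doubleFactorial : ℝ)) := by
        rw [← pow_mul, pow_mul', neg_one_sq, one_pow, one_mul]
    _ = _ := by
        rw [mul_mul_mul_comm, ← pow_add, hexp, integral_sin_pow_mul_cos_mul_prod]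
        ring

theorem neg_mul_two_div_four_mul_sq_sub_one_pos_iff (m : ℕ) :
    0 < -(2 / π) * (2 / (4 * (m : ℝ) ^ 2 - 1)) ↔ m = 0 := by
  rcases Nat.eq_zero_or_pos m with rfl | hm
  · norm_num [pi_pos]
  · have hden : (0 : ℝ) < 4 * m ^ 2 - 1 := by
      have : (1 : ℝ) ≤ m := by exact_mod_cast hm
      nlinarith
    simp only [hm.ne', iff_false, not_lt, neg_mul, neg_nonpos]
    positivity

/-- The integral `∫₀^π sin^{2n+1}x·cos(2mx) dx` in closed form; consequently the
evenised odd-order (`p = 2n+1`) forward-difference stencil coefficients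
`⁽ᵖ⁾d_m = (2ᵖ/M)·Σ_{k<M} sinᵖ(πk/M)cos(2πmk/M)` converge as `M → ∞` to `(2ᵖ/π)` times
this integral, whose sign is `(−1)^m` for `m ≤ n` and `(−1)^{n+1}` for `m > n`; in
particular for `p = 1` the limiting stencil `−(2/π)·2/(4m²−1)` is positive only at
`m = 0` (a Mexican hat). -/
theorem evenised_fwdDiff_limit (n m : ℕ) :
    ((∫ x in (0:ℝ)..Real.pi, Real.sin x ^ (2 * n + 1) * Real.cos (2 * m * x))
      = ((-1 : ℝ) ^ (n + 1) * 2 ^ (n + 1) * (n.factorial : ℝ) * ((2 * n + 1).doubleFactorial : ℝ))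
        / (∏ k ∈ Finset.range (n + 1), (4 * (m : ℝ) ^ 2 - (2 * (k : ℝ) + 1) ^ 2)))
    ∧ Tendsto (fun M : ℕ =>
        (2 ^ (2 * n + 1) / (M : ℝ)) *
          ∑ k ∈ Finset.range M,
            Real.sin (Real.pi * k / M) ^ (2 * n + 1) * Real.cos (2 * Real.pi * m * k / M))
        atTop
        (nhds ((2 ^ (2 * n + 1) / Real.pi) *
          ∫ x in (0:ℝ)..Real.pi, Real.sin x ^ (2 * n + 1) * Real.cos (2 * m * x)))
    ∧ (m ≤ n →
        Real.sign ((2 ^ (2 * n + 1) / Real.pi) *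
            ∫ x in (0:ℝ)..Real.pi, Real.sin x ^ (2 * n + 1) * Real.cos (2 * m * x))
          = (-1 : ℝ) ^ m)
    ∧ (n < m →
        Real.sign ((2 ^ (2 * n + 1) / Real.pi) *
            ∫ x in (0:ℝ)..Real.pi, Real.sin x ^ (2 * n + 1) * Real.cos (2 * m * x))
          = (-1 : ℝ) ^ (n + 1))
    ∧ (n = 0 →
        (0 < -(2 / Real.pi) * (2 / (4 * (m : ℝ) ^ 2 - 1)) ↔ m = 0)) := by
  have hsign : Real.sign ((2 ^ (2 * n + 1) / π) *
      ∫ x in (0 : ℝ)..π, sin x ^ (2 * n + 1) * cos (2 * m * x)) = (-1) ^ min m (n + 1) := by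
    refine sign_eq_neg_one_pow_of_pos_mul ?_
    rw [mul_left_comm]
    exact mul_pos (by positivity) (neg_one_pow_min_mul_integral_sin_pow_mul_cos_pos n m)
  refine ⟨integral_sin_pow_mul_cos_eq n m, ?_, fun h => by rw [hsign, min_eq_left (by omega)],
    fun h => by rw [hsign, min_eq_right h], fun _ => neg_mul_two_div_four_mul_sq_sub_one_pos_iff m⟩
  have h := (tendsto_riemannSum_div_integral
    (g := fun x => sin x ^ (2 * n + 1) * cos (2 * m * x)) (by fun_prop) pi_ne_zero).const_mul
    ((2 : ℝ) ^ (2 * n + 1))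
  convert h using 1
  · ext M
    rw [mul_div_assoc', div_mul_eq_mul_div]
    congr 3 with k
    ring_nf
  · rw [mul_div_assoc', div_mul_eq_mul_div]
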